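/- (Characterization of invariant polynomials, Lemma 2.x) Let α₀,…,α_ℓ : Ω → L and let P : Ω → L[X] be given by P(z, X) = Σ_{i=0}^{ℓ} α_i(z)X^i. Then (P ∥_{k,m} γ)(z, X) = P(z, X) for all γ ∈ Γ and z ∈ Ω if and only if for every 0 ≤ i ≤ ℓ one has (α_i |_{k−2i,m−i} γ)(z) = Σ_{j=i}^{ℓ} (j choose i) α_j(z)(c/(cz+d))^{j−i} for all γ = (a, b; c, d) ∈ Γ and z ∈ Ω, i.e. each α_i is quasi-modular of weight k−2i, type m−i and depth ≤ ℓ−i for Γ with coefficient family ((j choose i)·α_j)_{j=i,…,ℓ}. -/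

import Mathlib

noncomputable section

namespace DrinfeldQM

variable {L : Type*} [Field L]

/-- Entry `(i,j)` of `γ ∈ GL₂(F)`, viewed inside `L`. -/
def Mc (F : Subfield L) (γ : GL (Fin 2) F) (i j : Fin 2) : L :=
  ((γ : Matrix (Fin 2) (Fin 2) F) i j : L)

/-- Determinant of `γ ∈ GL₂(F)`, viewed inside `L`. -/
def detL (F : Subfield L) (γ : GL (Fin 2) F) : L :=
  ((γ : Matrix (Fin 2) (Fin 2) F).det : L)

/-- Automorphy factor `cz + d`. -/
def jf (F : Subfield L) (γ : GL (Fin 2) F) (z : L) : L :=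
  Mc F γ 1 0 * z + Mc F γ 1 1

/-- Fractional linear action of `GL₂(F)` on `L` (restricting to `Ω`). -/
def act (F : Subfield L) (γ : GL (Fin 2) F) (z : L) : L :=
  (Mc F γ 0 0 * z + Mc F γ 0 1) / jf F γ z

/-- The Drinfeld upper half plane `Ω = L ∖ F`. -/
def Omega (F : Subfield L) : Set L := {z | z ∉ F}

/-- The slash operator `f |_{k,m} γ` of weight `k` and type `m`. -/
def slash (F : Subfield L) (k m : ℤ) (f : L → L) (γ : GL (Fin 2) F) : L → L :=
  fun z => detL F γ ^ m * jf F γ z ^ (-k) * f (act F γ z)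

/-- `f` is quasi-modular of weight `k`, type `m` and depth `≤ ℓ` for the set `S ⊆ GL₂(F)`
with coefficient family `fam` (only the indices `0,…,ℓ` of `fam` are relevant). -/
def IsQM (F : Subfield L) (S : Set (GL (Fin 2) F)) (k m : ℤ) (ℓ : ℕ)
    (f : L → L) (fam : ℕ → L → L) : Prop :=
  Set.EqOn (fam 0) f (Omega F) ∧
    ∀ γ ∈ S, ∀ z ∈ Omega F,
      slash F k m f γ z =
        ∑ i ∈ Finset.range (ℓ + 1), fam i z * (Mc F γ 1 0 / jf F γ z) ^ i

/-- The coefficient family of the `i`-th coefficient `f_i` of a quasi-modular function with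
coefficient family `fam`:  `(f_i)_h = ((h+i) choose i) · f_{h+i}`. -/
def shiftFam (i : ℕ) (fam : ℕ → L → L) : ℕ → L → L :=
  fun h z => ((h + i).choose i : L) * fam (h + i) z

/-- The double-slash operator `f ∥_{k,m} γ` of a quasi-modular function of depth `≤ ℓ` with
coefficient family `fam`. -/
def dslash (F : Subfield L) (k m : ℤ) (ℓ : ℕ) (fam : ℕ → L → L)
    (γ : GL (Fin 2) F) : L → L :=
  fun z => ∑ i ∈ Finset.range (ℓ + 1),
    (-(Mc F γ 1 0) / jf F γ z) ^ i * detL F γ ^ (m - (i : ℤ)) *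
      jf F γ z ^ (2 * (i : ℤ) - k) * fam i (act F γ z)

/-- The double-slash operator on polynomial-valued functions `P : Ω → L[X]`:
`(P ∥_{k,m} γ)(z, X) = (det γ)^m (cz+d)^{-k} P(γ·z, ((cz+d)²/det γ)(X - c/(cz+d)))`. -/
def pdslash (F : Subfield L) (k m : ℤ) (P : L → Polynomial L)
    (γ : GL (Fin 2) F) : L → Polynomial L :=
  fun z =>
    Polynomial.C (detL F γ ^ m * jf F γ z ^ (-k)) *
      (P (act F γ z)).comp
        (Polynomial.C (jf F γ z ^ 2 / detL F γ) *
          (Polynomial.X - Polynomial.C (Mc F γ 1 0 / jf F γ z)))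

/-- The associated polynomial `P_f(z, X) = ∑_{i=0}^{ℓ} f_i(z) Xⁱ`. -/
def assocPoly (ℓ : ℕ) (fam : ℕ → L → L) : L → Polynomial L :=
  fun z => ∑ i ∈ Finset.range (ℓ + 1), Polynomial.C (fam i z) * Polynomial.X ^ i

/-- `E` satisfies the functional equation of the false Eisenstein series (weight 2, type 1,
depth 1, coefficient family `(E, -π⁻¹)`) for all `γ ∈ S`. -/
def EFunEq (F : Subfield L) (S : Set (GL (Fin 2) F)) (π : L) (E : L → L) : Prop :=
  ∀ γ ∈ S, ∀ z ∈ Omega F,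
    E (act F γ z) =
      (detL F γ)⁻¹ * jf F γ z ^ 2 * (E z - Mc F γ 1 0 / (π * jf F γ z))

end DrinfeldQM

/-!
In `P ∥_{k,m} γ` the substitution `X ↦ s (X - w)`, with `s = (cz+d)²/det γ` and `w = c/(cz+d)`,
is the scaling `X ↦ s X` followed by the Taylor shift by `-w`. Undoing the shift, invariance at
`(γ, z)` says that `(det γ)^m (cz+d)^{-k} P(γz, s X)` is the Taylor expansion of `P(z, X)` at `w`.
Both sides have degree `≤ ℓ`; the `Xⁱ`-coefficient on the left is `(αᵢ |_{k-2i,m-i} γ)(z)`, and on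
the right it is `∑ⱼ (j choose i) αⱼ(z) w^{j-i}`.
-/

open Polynomial

namespace Polynomial

section Semiring

variable {R : Type*} [Semiring R]

theorem natDegree_sum_range_C_mul_X_pow_le (n : ℕ) (a : ℕ → R) :
    (∑ j ∈ Finset.range (n + 1), C (a j) * X ^ j).natDegree ≤ n :=
  natDegree_sum_le_of_forall_le _ _ fun j hj =>
    natDegree_C_mul_X_pow_le (a j) j |>.trans (Finset.mem_range_succ_iff.mp hj)

theorem coeff_sum_range_C_mul_X_pow (n : ℕ) (a : ℕ → R) {i : ℕ} (hi : i < n) :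
    (∑ j ∈ Finset.range n, C (a j) * X ^ j).coeff i = a i := by
  simp [finsetSum_coeff, hi]

theorem natDegree_comp_C_mul_X_le (p : R[X]) (r : R) :
    (p.comp (C r * X)).natDegree ≤ p.natDegree :=
  natDegree_le_iff_coeff_eq_zero.mpr fun n hn => by
    rw [comp_C_mul_X_coeff, coeff_eq_zero_of_natDegree_lt hn, zero_mul]

end Semiring

theorem coeff_taylor_sum_range_C_mul_X_pow {R : Type*} [CommSemiring R] (n : ℕ) (a : ℕ → R)
    (w : R) (i : ℕ) :
    (taylor w (∑ j ∈ Finset.range n, C (a j) * X ^ j)).coeff i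
      = ∑ j ∈ Finset.range n, (j.choose i : R) * (a j * w ^ (j - i)) := by
  simp only [map_sum, finsetSum_coeff, taylor_apply, mul_comp, C_comp, pow_comp, X_comp,
    coeff_C_mul, coeff_X_add_C_pow]
  exact Finset.sum_congr rfl fun j _ => by ring

theorem taylor_eq_iff_eq_taylor_neg {R : Type*} [CommRing R] (r : R) (p q : R[X]) :
    taylor r p = q ↔ p = taylor (-r) q := by
  constructor <;> rintro rfl <;> simp [taylor_taylor]

end Polynomial

theorem Finset.sum_range_choose_mul_eq_sum_range_add {R : Type*} [Semiring R] (f : ℕ → R)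
    {i ℓ : ℕ} (hi : i ≤ ℓ) :
    ∑ j ∈ Finset.range (ℓ + 1), (j.choose i : R) * f j
      = ∑ h ∈ Finset.range (ℓ - i + 1), ((h + i).choose i : R) * f (h + i) := by
  obtain ⟨n, rfl⟩ := Nat.exists_eq_add_of_le hi
  rw [Nat.add_sub_cancel_left, add_assoc, Finset.sum_range_add, Finset.sum_eq_zero fun j hj => by
    rw [Nat.choose_eq_zero_of_lt (Finset.mem_range.mp hj), Nat.cast_zero, zero_mul], zero_add]
  simp only [add_comm i]

namespace DrinfeldQM

variable {L : Type*} [Field L] (F : Subfield L)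

theorem detL_ne_zero (γ : GL (Fin 2) F) : detL F γ ≠ 0 := by
  simpa [detL] using ((Matrix.isUnit_iff_isUnit_det _).mp γ.isUnit).ne_zero

theorem detL_eq (γ : GL (Fin 2) F) :
    detL F γ = Mc F γ 0 0 * Mc F γ 1 1 - Mc F γ 0 1 * Mc F γ 1 0 := by
  simp [detL, Mc, Matrix.det_fin_two]

theorem jf_ne_zero {γ : GL (Fin 2) F} {z : L} (hz : z ∈ Omega F) : jf F γ z ≠ 0 := by
  intro h
  by_cases hc : Mc F γ 1 0 = 0
  · have hd : Mc F γ 1 1 = 0 := by simpa [jf, hc] using h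
    exact detL_ne_zero F γ (by rw [detL_eq, hc, hd]; ring)
  · have hz' : z = -Mc F γ 1 1 / Mc F γ 1 0 := by
      rw [jf] at h
      rw [eq_div_iff hc]
      linear_combination h
    exact hz (hz' ▸ div_mem (neg_mem (SetLike.coe_mem _)) (SetLike.coe_mem _))

theorem pdslash_eq_taylor (k m : ℤ) (P : L → L[X]) (γ : GL (Fin 2) F) (z : L) :
    pdslash F k m P γ z = taylor (-(Mc F γ 1 0 / jf F γ z))
      (C (detL F γ ^ m * jf F γ z ^ (-k)) *
        (P (act F γ z)).comp (C (jf F γ z ^ 2 / detL F γ) * X)) := by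
  rw [pdslash, taylor_apply, mul_comp, C_comp, comp_assoc, mul_comp, C_comp, X_comp, C_neg,
    ← sub_eq_add_neg]

theorem slash_sub_two_mul_sub (k m : ℤ) (i : ℕ) (f : L → L) (γ : GL (Fin 2) F) {z : L}
    (hz : z ∈ Omega F) :
    slash F (k - 2 * (i : ℤ)) (m - (i : ℤ)) f γ z =
      detL F γ ^ m * jf F γ z ^ (-k) * (jf F γ z ^ 2 / detL F γ) ^ i * f (act F γ z) := by
  have hD := detL_ne_zero F γ
  have hJ := jf_ne_zero F (γ := γ) hz
  rw [slash, zpow_sub₀ hD, neg_sub, zpow_sub₀ hJ, zpow_neg, zpow_mul, zpow_natCast, zpow_natCast,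
    div_pow, ← pow_mul]
  field_simp
  ring

theorem pdslash_assocPoly_eq_iff (k m : ℤ) (ℓ : ℕ) (α : ℕ → L → L) (γ : GL (Fin 2) F) {z : L}
    (hz : z ∈ Omega F) :
    pdslash F k m (assocPoly ℓ α) γ z = assocPoly ℓ α z ↔
      ∀ i ≤ ℓ, slash F (k - 2 * (i : ℤ)) (m - (i : ℤ)) (α i) γ z =
        ∑ h ∈ Finset.range (ℓ - i + 1), shiftFam i α h z * (Mc F γ 1 0 / jf F γ z) ^ h := by
  simp only [pdslash_eq_taylor, taylor_eq_iff_eq_taylor_neg, neg_neg, assocPoly]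
  rw [ext_iff_natDegree_le _ ((natDegree_taylor _ _).trans_le
      (natDegree_sum_range_C_mul_X_pow_le _ _))]
  · refine forall₂_congr fun i hi => ?_
    rw [coeff_C_mul, comp_C_mul_X_coeff, coeff_sum_range_C_mul_X_pow _ _ (by omega),
      coeff_taylor_sum_range_C_mul_X_pow, slash_sub_two_mul_sub F k m i _ γ hz,
      Finset.sum_range_choose_mul_eq_sum_range_add _ hi, mul_comm (α i _), ← mul_assoc]
    simp only [shiftFam, add_tsub_cancel_right, mul_assoc]
  · exact (natDegree_C_mul_le _ _).trans <| (natDegree_comp_C_mul_X_le _ _).trans <|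
      natDegree_sum_range_C_mul_X_pow_le _ _

/-- A polynomial `P(z,X) = ∑ αᵢ(z) Xⁱ` is invariant under the double-slash action of `Γ`
iff each `αᵢ` is quasi-modular of weight `k-2i`, type `m-i` and depth `≤ ℓ-i` with
coefficient family `((j choose i)·α_j)_{j=i,…,ℓ}`. -/
theorem invariant_iff_coefficients_quasi_modular
    {L : Type*} [Field L] (F : Subfield L) (Γ : Subgroup (GL (Fin 2) F))
    (k m : ℤ) (ℓ : ℕ) (α : ℕ → L → L) :
    (∀ γ ∈ Γ, ∀ z ∈ Omega F,
        pdslash F k m (assocPoly ℓ α) γ z = assocPoly ℓ α z) ↔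
      ∀ i ≤ ℓ, IsQM F (Γ : Set (GL (Fin 2) F)) (k - 2 * (i : ℤ)) (m - (i : ℤ)) (ℓ - i)
        (α i) (shiftFam i α) := by
  have hfam (i : ℕ) : Set.EqOn (shiftFam i α 0) (α i) (Omega F) := fun z _ => by simp [shiftFam]
  simp only [IsQM, hfam, true_and]
  constructor
  · intro h i hi γ hγ z hz
    exact (pdslash_assocPoly_eq_iff F k m ℓ α γ hz).1 (h γ hγ z hz) i hi
  · intro h γ hγ z hz
    exact (pdslash_assocPoly_eq_iff F k m ℓ α γ hz).2 fun i hi => h i hi γ hγ z hz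

end DrinfeldQM
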